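/- Fix k ≥ 1 and γ ∈ (0, 1 − 1/n). Suppose that for every s ∈ {1,…,k} the error satisfies 0 < ε_s ≤ 1 − 1/n − γ and α_s is given by the formula α_s = (1/(2(n−1)))·log((n−1)(1−ε_s)/ε_s). Then Π_{s=1}^k Z_s ≤ φ(1 − 1/n − γ)^k. -/

import Mathlib

open Finset

noncomputable section

variable {P A : Type*}

/-- The multiplicative weight factor `exp(−α·[(n−1)·𝟙(h(p)=y(p)) − 𝟙(h(p)≠y(p))])`. -/
def wfac [DecidableEq A] (n : ℕ) (αs : ℝ) (hs y : P → A) (p : P) : ℝ :=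
  Real.exp (-(αs * (((n : ℝ) - 1) * (if hs p = y p then 1 else 0) -
    (if hs p = y p then 0 else 1))))

/-- The weight sequence: `dseq n α h y s` is the distribution `d_s` (for `s ≥ 1`),
with `d_1` uniform and `d_{s+1}(p) = d_s(p)·wfac(α_s,h_s)(p) / Z_s`. -/
def dseq [Fintype P] [DecidableEq A] (n : ℕ) (α : ℕ → ℝ) (h : ℕ → P → A) (y : P → A) :
    ℕ → P → ℝ
  | 0 => fun _ => 1 / (Fintype.card P : ℝ)
  | 1 => fun _ => 1 / (Fintype.card P : ℝ)
  | (s + 2) => fun p =>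
      dseq n α h y (s + 1) p * wfac n (α (s + 1)) (h (s + 1)) y p /
        ∑ q, dseq n α h y (s + 1) q * wfac n (α (s + 1)) (h (s + 1)) y q

/-- The normalizer `Z_s = Σ_p d_s(p)·exp(−α_s·[(n−1)·𝟙(h_s(p)=y(p)) − 𝟙(h_s(p)≠y(p))])`. -/
def Zseq [Fintype P] [DecidableEq A] (n : ℕ) (α : ℕ → ℝ) (h : ℕ → P → A) (y : P → A)
    (s : ℕ) : ℝ :=
  ∑ q, dseq n α h y s q * wfac n (α s) (h s) y q

/-- `F^k_a(p) = Σ_{s=1}^k α_s·𝟙[h_s(p)=a]`. -/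
def Fsc [DecidableEq A] (α : ℕ → ℝ) (h : ℕ → P → A) (k : ℕ) (a : A) (p : P) : ℝ :=
  ∑ s ∈ Finset.Icc 1 k, α s * (if h s p = a then 1 else 0)

/-- `Ψ^k_a(p) = (n−1)·F^k_a(p) − Σ_{a'≠a} F^k_{a'}(p)` where `n = |A|`. -/
def Psi [Fintype A] [DecidableEq A] (α : ℕ → ℝ) (h : ℕ → P → A) (k : ℕ) (a : A) (p : P) : ℝ :=
  ((Fintype.card A : ℝ) - 1) * Fsc α h k a p - ∑ a' ∈ Finset.univ.erase a, Fsc α h k a' p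

/-- The error `ε_s = Σ_{p : h_s(p)≠y(p)} d_s(p)`. -/
def err [Fintype P] [DecidableEq A] (n : ℕ) (α : ℕ → ℝ) (h : ℕ → P → A) (y : P → A)
    (s : ℕ) : ℝ :=
  ∑ p ∈ Finset.univ.filter (fun p => h s p ≠ y p), dseq n α h y s p

/-- `φ(ε) = (n−1)^{−1/2}·ε^{1/2}·(1−ε)^{1/2}
      + (n−1)^{1/(2(n−1))}·(1−ε)^{1/(2(n−1))}·ε^{1−1/(2(n−1))}`. -/
def phi (n : ℕ) (ε : ℝ) : ℝ :=
  ((n : ℝ) - 1) ^ (-(1 / 2) : ℝ) * ε ^ ((1 : ℝ) / 2) * (1 - ε) ^ ((1 : ℝ) / 2) +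
    ((n : ℝ) - 1) ^ (1 / (2 * ((n : ℝ) - 1))) * (1 - ε) ^ (1 / (2 * ((n : ℝ) - 1))) *
      ε ^ (1 - 1 / (2 * ((n : ℝ) - 1)))

/-!
Since `d_s` is a probability distribution, `Z_s = (1 - ε_s) e^{-(n-1)α_s} + ε_s e^{α_s}`, and at
the prescribed `α_s` this value is `φ(ε_s)`. It remains to see that `φ` is nondecreasing on
`(0, 1 - 1/n]`. For `ε ≤ ε₀` the prescribed step satisfies `α(ε₀) ≤ α(ε)`, and both lie left of the
minimiser of the convex function `α ↦ (1 - ε) e^{-(n-1)α} + ε e^{α}`; so moving from `α(ε)` to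
`α(ε₀)` does not decrease it, and raising the weight `ε` to `ε₀` at the fixed step
`α(ε₀) ≥ 0` does not either.
-/

section

open Real

variable {m ε ε' a b : ℝ}

def expLoss (m ε α : ℝ) : ℝ := (1 - ε) * exp (-(m * α)) + ε * exp α

def sammeAlpha (m ε : ℝ) : ℝ := 1 / (2 * m) * log (m * (1 - ε) / ε)

/-- Tangent-line bound at `b` for the convex function `expLoss m ε`, whose slope at `b` is
nonpositive by `hb`. -/
lemma expLoss_le_of_le_of_slope_nonpos (hε0 : 0 ≤ ε) (hε1 : ε ≤ 1) (hab : a ≤ b)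
    (hb : ε * exp b ≤ m * (1 - ε) * exp (-(m * b))) :
    expLoss m ε b ≤ expLoss m ε a := by
  have hcorrect : exp (-(m * b)) * (1 + m * (b - a)) ≤ exp (-(m * a)) := by
    have := add_one_le_exp (m * (b - a))
    calc exp (-(m * b)) * (1 + m * (b - a)) ≤ exp (-(m * b)) * exp (m * (b - a)) := by
          gcongr; linarith
      _ = exp (-(m * a)) := by rw [← exp_add]; ring_nf
  have hwrong : exp b * (1 - (b - a)) ≤ exp a := by
    have := add_one_le_exp (-(b - a))
    calc exp b * (1 - (b - a)) ≤ exp b * exp (-(b - a)) := by gcongr; linarith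
      _ = exp a := by rw [← exp_add]; ring_nf
  unfold expLoss
  nlinarith [mul_le_mul_of_nonneg_left hcorrect (sub_nonneg.2 hε1),
    mul_le_mul_of_nonneg_left hwrong hε0, mul_le_mul_of_nonneg_right hb (sub_nonneg.2 hab)]

lemma expLoss_le_expLoss_of_le (hm : 0 ≤ m) (ha : 0 ≤ a) (hεε' : ε ≤ ε') :
    expLoss m ε a ≤ expLoss m ε' a := by
  have h1 : exp (-(m * a)) ≤ exp a := exp_le_exp.2 (by nlinarith)
  unfold expLoss
  nlinarith

lemma exp_two_mul_sammeAlpha (hm : 0 < m) (hε0 : 0 < ε) (hε1 : ε < 1) :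
    exp (2 * m * sammeAlpha m ε) = m * (1 - ε) / ε := by
  rw [sammeAlpha, ← mul_assoc, mul_one_div_cancel (by positivity), one_mul,
    exp_log (by apply div_pos <;> nlinarith)]

lemma sammeAlpha_nonneg (hm : 0 < m) (hε0 : 0 < ε) (hεm : ε * (m + 1) ≤ m) :
    0 ≤ sammeAlpha m ε :=
  mul_nonneg (by positivity) (log_nonneg (by rw [le_div_iff₀ hε0]; linarith))

lemma sammeAlpha_anti (hm : 0 < m) (hε0 : 0 < ε) (hεε' : ε ≤ ε') (hε' : ε' < 1) :
    sammeAlpha m ε' ≤ sammeAlpha m ε := by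
  have hε'0 : 0 < ε' := hε0.trans_le hεε'
  refine mul_le_mul_of_nonneg_left (log_le_log (by apply div_pos <;> nlinarith) ?_) (by positivity)
  rw [div_le_div_iff₀ hε'0 hε0]; nlinarith

/-- The slope of `expLoss m ε` at `sammeAlpha m ε` is nonpositive: the minimiser of
`expLoss m ε` is `log (m(1-ε)/ε) / (m + 1)`, and `sammeAlpha` divides by `2m ≥ m + 1` instead. -/
lemma mul_exp_sammeAlpha_le (hm : 1 ≤ m) (hε0 : 0 < ε) (hεm : ε * (m + 1) ≤ m) :
    ε * exp (sammeAlpha m ε) ≤ m * (1 - ε) * exp (-(m * sammeAlpha m ε)) := by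
  set a := sammeAlpha m ε
  have ha : 0 ≤ a := sammeAlpha_nonneg (by linarith) hε0 hεm
  have hgrowth : exp ((m + 1) * a) ≤ m * (1 - ε) / ε := by
    rw [← exp_two_mul_sammeAlpha (by linarith) hε0 (by nlinarith)]
    exact exp_le_exp.2 (by nlinarith)
  have hsplit : exp a = exp ((m + 1) * a) * exp (-(m * a)) := by rw [← exp_add]; ring_nf
  rw [le_div_iff₀' hε0] at hgrowth
  rw [hsplit, ← mul_assoc]
  exact mul_le_mul_of_nonneg_right hgrowth (exp_pos _).le

lemma expLoss_sammeAlpha_le_of_le (hm : 1 ≤ m) (hε0 : 0 < ε) (hεε' : ε ≤ ε')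
    (hε'm : ε' * (m + 1) ≤ m) :
    expLoss m ε (sammeAlpha m ε) ≤ expLoss m ε' (sammeAlpha m ε') := by
  have hε'0 : 0 < ε' := hε0.trans_le hεε'
  have hεm : ε * (m + 1) ≤ m := le_trans (by nlinarith) hε'm
  calc expLoss m ε (sammeAlpha m ε) ≤ expLoss m ε (sammeAlpha m ε') :=
        expLoss_le_of_le_of_slope_nonpos hε0.le (by nlinarith)
          (sammeAlpha_anti (by linarith) hε0 hεε' (by nlinarith)) (mul_exp_sammeAlpha_le hm hε0 hεm)
    _ ≤ expLoss m ε' (sammeAlpha m ε') :=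
        expLoss_le_expLoss_of_le (by linarith) (sammeAlpha_nonneg (by linarith) hε'0 hε'm) hεε'

lemma expLoss_sammeAlpha_eq_phi {n : ℕ} (hn : 2 ≤ n) (hε0 : 0 < ε) (hε1 : ε < 1) :
    expLoss ((n : ℝ) - 1) ε (sammeAlpha ((n : ℝ) - 1) ε) = phi n ε := by
  have hm : (0 : ℝ) < (n : ℝ) - 1 := by
    have : (2 : ℝ) ≤ n := by exact_mod_cast hn
    linarith
  have hε1' : 0 < 1 - ε := by linarith
  have hexp_log : ∀ c X : ℝ, 0 < c → c * exp X = exp (log c + X) := fun c X hc => by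
    rw [exp_add, exp_log hc]
  unfold expLoss sammeAlpha phi
  set m : ℝ := (n : ℝ) - 1
  rw [log_div (by positivity) hε0.ne', log_mul hm.ne' hε1'.ne', rpow_def_of_pos hm,
    rpow_def_of_pos hm, rpow_def_of_pos hε0, rpow_def_of_pos hε0, rpow_def_of_pos hε1',
    rpow_def_of_pos hε1', hexp_log _ _ hε1', hexp_log _ _ hε0, ← exp_add, ← exp_add, ← exp_add,
    ← exp_add]
  congr 2 <;> field_simp <;> ring

lemma wfac_pos [DecidableEq A] (n : ℕ) (αs : ℝ) (hs y : P → A) (p : P) :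
    0 < wfac n αs hs y p :=
  exp_pos _

variable [Fintype P] [DecidableEq A] (n : ℕ) (α : ℕ → ℝ) (h : ℕ → P → A) (y : P → A)

lemma dseq_nonneg : ∀ s p, 0 ≤ dseq n α h y s p
  | 0, _ | 1, _ => by simp only [dseq]; positivity
  | s + 2, p => div_nonneg (mul_nonneg (dseq_nonneg (s + 1) p) (wfac_pos ..).le)
      (sum_nonneg fun q _ => mul_nonneg (dseq_nonneg (s + 1) q) (wfac_pos ..).le)

lemma Zseq_nonneg (s : ℕ) : 0 ≤ Zseq n α h y s :=
  sum_nonneg fun q _ => mul_nonneg (dseq_nonneg n α h y s q) (wfac_pos ..).le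

lemma Zseq_pos {s : ℕ} (hs : ∑ p, dseq n α h y s p = 1) : 0 < Zseq n α h y s := by
  obtain ⟨q, -, hq⟩ := exists_lt_of_sum_lt (s := univ) (f := fun _ => (0 : ℝ))
    (g := dseq n α h y s) (by simp [hs])
  exact sum_pos' (fun q _ => mul_nonneg (dseq_nonneg n α h y s q) (wfac_pos ..).le)
    ⟨q, mem_univ q, mul_pos hq (wfac_pos ..)⟩

lemma sum_dseq [Nonempty P] : ∀ s, ∑ p, dseq n α h y s p = 1
  | 0 | 1 => by simp [dseq]
  | s + 2 => by
    simp only [dseq]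
    rw [← sum_div]
    exact div_self (Zseq_pos n α h y (sum_dseq (s + 1))).ne'

lemma Zseq_eq_expLoss [Nonempty P] (s : ℕ) :
    Zseq n α h y s = expLoss ((n : ℝ) - 1) (err n α h y s) (α s) := by
  have hterm : ∀ q, dseq n α h y s q * wfac n (α s) (h s) y q =
      if h s q = y q then dseq n α h y s q * exp (-(((n : ℝ) - 1) * α s))
      else dseq n α h y s q * exp (α s) := by
    intro q
    unfold wfac
    split_ifs <;> ring_nf
  have hcorrect := sum_filter_add_sum_filter_not univ (fun p => h s p = y p) (dseq n α h y s)
  rw [sum_dseq] at hcorrect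
  unfold Zseq expLoss err
  simp only [hterm, sum_ite, ← sum_mul, ne_eq]
  rw [← hcorrect, add_sub_cancel_right]

end

theorem stmt16_general [Fintype P] [Nonempty P] [Fintype A] [DecidableEq A]
    (hn : 2 ≤ Fintype.card A)
    (α : ℕ → ℝ) (h : ℕ → P → A) (y : P → A)
    (k : ℕ)
    (γ : ℝ) (hγ : γ ∈ Set.Ioo (0 : ℝ) (1 - 1 / (Fintype.card A : ℝ)))
    (hε : ∀ s ∈ Finset.Icc 1 k,
      0 < err (Fintype.card A) α h y s ∧
        err (Fintype.card A) α h y s ≤ 1 - 1 / (Fintype.card A : ℝ) - γ)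
    (hα : ∀ s ∈ Finset.Icc 1 k,
      α s = 1 / (2 * ((Fintype.card A : ℝ) - 1)) *
        Real.log (((Fintype.card A : ℝ) - 1) * (1 - err (Fintype.card A) α h y s) /
          err (Fintype.card A) α h y s)) :
    ∏ s ∈ Finset.Icc 1 k, Zseq (Fintype.card A) α h y s ≤
      phi (Fintype.card A) (1 - 1 / (Fintype.card A : ℝ) - γ) ^ k := by
  set n := Fintype.card A
  set ε₀ := 1 - 1 / (n : ℝ) - γ
  have hn' : (2 : ℝ) ≤ n := by exact_mod_cast hn
  have hε₀ : ε₀ * ((n - 1 : ℝ) + 1) ≤ n - 1 := by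
    have : ε₀ * ((n - 1 : ℝ) + 1) = n - 1 - γ * n := by
      simp only [ε₀]; field_simp; ring
    nlinarith [hγ.1]
  have hZ : ∀ s ∈ Icc 1 k, Zseq n α h y s ≤ phi n ε₀ := by
    intro s hs
    obtain ⟨hε0, hεε₀⟩ := hε s hs
    rw [Zseq_eq_expLoss, hα s hs, ← expLoss_sammeAlpha_eq_phi hn (hε0.trans_le hεε₀) (by nlinarith)]
    exact expLoss_sammeAlpha_le_of_le (by linarith) hε0 hεε₀ hε₀
  calc ∏ s ∈ Icc 1 k, Zseq n α h y s ≤ ∏ _s ∈ Icc 1 k, phi n ε₀ :=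
        prod_le_prod (fun s _ => Zseq_nonneg n α h y s) hZ
    _ = phi n ε₀ ^ k := by simp

/-- under the weak-learnability error bounds and the SAMME-type choice of
`α_s`, the product of the normalizers satisfies `Π_{s=1}^k Z_s ≤ φ(1−1/n−γ)^k`. -/
theorem stmt16 [Fintype P] [Nonempty P] [Fintype A] [DecidableEq A]
    (hn : 2 ≤ Fintype.card A)
    (α : ℕ → ℝ) (h : ℕ → P → A) (y : P → A)
    (k : ℕ) (hk : 1 ≤ k)
    (γ : ℝ) (hγ : γ ∈ Set.Ioo (0 : ℝ) (1 - 1 / (Fintype.card A : ℝ)))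
    (hε : ∀ s ∈ Finset.Icc 1 k,
      0 < err (Fintype.card A) α h y s ∧
        err (Fintype.card A) α h y s ≤ 1 - 1 / (Fintype.card A : ℝ) - γ)
    (hα : ∀ s ∈ Finset.Icc 1 k,
      α s = 1 / (2 * ((Fintype.card A : ℝ) - 1)) *
        Real.log (((Fintype.card A : ℝ) - 1) * (1 - err (Fintype.card A) α h y s) /
          err (Fintype.card A) α h y s)) :
    ∏ s ∈ Finset.Icc 1 k, Zseq (Fintype.card A) α h y s ≤
      phi (Fintype.card A) (1 - 1 / (Fintype.card A : ℝ) - γ) ^ k :=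
  stmt16_general hn α h y k γ hγ hε hα

end
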